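/- arXiv:2411.01967 — 2 statements merged into one kernel-verified Lean document; each statement's English description precedes it below -/
import Mathlib

section
/- Let F/F_q be a function field of genus g with L-polynomial L(t) = ∑_{i=0}^{2g} a_i t^i and class number h = L(1). Then the number of effective divisors of degree g-1 satisfies A_{g-1} = (1/(q-1))·(h - (a_g + 2∑_{i=0}^{g-1} a_i)). -/
/-- An abstract model of an algebraic function field of one variable over a
finite field `𝔽_q`, bundling the data needed for Riemann-Roch theory:
places with degrees, a genus, Riemann-Roch space dimensions of divisors
(divisors are finitely supported `ℤ`-valued functions on places),
a canonical divisor and the subgroup of principal divisors. -/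
structure FnField where
  q : ℕ
  hq : 2 ≤ q
  Place : Type
  degPlace : Place → ℕ
  degPlace_pos : ∀ P, 0 < degPlace P
  g : ℕ
  dim : (Place →₀ ℤ) → ℕ
  K : Place →₀ ℤ
  Princ : AddSubgroup (Place →₀ ℤ)
  princ_deg : ∀ D ∈ Princ, (D.sum fun P n => n * (degPlace P : ℤ)) = 0
  riemann_roch : ∀ D : Place →₀ ℤ,
    (dim D : ℤ) = (D.sum fun P n => n * (degPlace P : ℤ)) - g + 1 + dim (K - D)
  dim_K : dim K = g
  dim_zero : dim 0 = 1
  dim_neg : ∀ D : Place →₀ ℤ, (D.sum fun P n => n * (degPlace P : ℤ)) < 0 → dim D = 0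
  dim_equiv : ∀ D₁ D₂ : Place →₀ ℤ, D₁ - D₂ ∈ Princ → dim D₁ = dim D₂
  dim_pos_iff : ∀ D : Place →₀ ℤ,
    0 < dim D ↔ ∃ E : Place →₀ ℤ, (∀ P, 0 ≤ E P) ∧ D - E ∈ Princ

namespace FnField

/-- Divisors of the function field. -/
abbrev Div (F : FnField) := F.Place →₀ ℤ

variable (F : FnField)

/-- Degree of a divisor. -/
def deg (D : Div F) : ℤ := D.sum fun P n => n * (F.degPlace P : ℤ)

/-- A divisor is effective if all its coefficients are nonnegative. -/
def Effective (D : Div F) : Prop := ∀ P, 0 ≤ D P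

/-- A divisor is non-special if its index of speciality `i(D) = dim(K - D)` is zero. -/
def NonSpecial (D : Div F) : Prop := F.dim (F.K - D) = 0

/-- `B₁`: the number of places of degree one (rational places/points). -/
noncomputable def B1 : ℕ := Nat.card {P : F.Place // F.degPlace P = 1}

/-- `Aₙ`: the number of effective divisors of degree `n`. -/
noncomputable def A (n : ℤ) : ℕ := Nat.card {D : Div F // F.Effective D ∧ F.deg D = n}

/-- The class number `h`: the number of linear equivalence classes of
divisors of degree zero. -/
noncomputable def hClass : ℕ :=
  Nat.card (Quot fun (D₁ D₂ : {D : Div F // F.deg D = 0}) => (D₁ : Div F) - (D₂ : Div F) ∈ F.Princ)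

end FnField

/-- If `L(t) = ∑ aᵢ tⁱ` is the L-polynomial of `F/𝔽_q` (characterized by
`a₀ = 1`, the functional equation `a_{2g-i} = q^{g-i} aᵢ`, `h = L(1)` and the
zeta-function identity `(q-1) A_m = ∑_{i=0}^m (q^{m-i+1} - 1) aᵢ`), then
`(q - 1) A_{g-1} = h - (a_g + 2 ∑_{i=0}^{g-1} aᵢ)`. -/
theorem stmt11 (F : FnField) (a : ℕ → ℤ) (ha0 : a 0 = 1)
    (hatop : ∀ i, 2 * F.g < i → a i = 0)
    (hfe : ∀ i ≤ F.g, a (2 * F.g - i) = (F.q : ℤ) ^ (F.g - i) * a i)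
    (hh : (F.hClass : ℤ) = ∑ i ∈ Finset.range (2 * F.g + 1), a i)
    (hzeta : ∀ m : ℕ, ((F.q : ℤ) - 1) * F.A (m : ℤ) =
      ∑ i ∈ Finset.range (m + 1), ((F.q : ℤ) ^ (m - i + 1) - 1) * a i) :
    ((F.q : ℤ) - 1) * F.A ((F.g : ℤ) - 1) =
      (F.hClass : ℤ) - (a F.g + 2 * ∑ i ∈ Finset.range F.g, a i) := by
  rcases Nat.eq_zero_or_pos F.g with hg | hg
  · -- genus zero: there are no effective divisors of degree -1
    have hA : F.A ((F.g : ℤ) - 1) = 0 := by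
      rw [FnField.A, Nat.card_eq_zero]
      left
      constructor
      rintro ⟨D, hD, hdeg⟩
      have h0 : 0 ≤ F.deg D := by
        apply Finset.sum_nonneg
        intro P _
        exact mul_nonneg (hD P) (by positivity)
      rw [hdeg, hg] at h0
      norm_num at h0
    rw [hA, hh, hg]
    simp [ha0]
  · obtain ⟨m, hm⟩ : ∃ m, F.g = m + 1 := ⟨F.g - 1, by omega⟩
    have hz := hzeta m
    have hcast : ((m : ℕ) : ℤ) = (F.g : ℤ) - 1 := by rw [hm]; push_cast; ring
    rw [hcast] at hz
    rw [hz, hh, hm]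
    have hsplit : ∑ i ∈ Finset.range (2 * (m + 1) + 1), a i
        = (∑ i ∈ Finset.range (m + 2), a i) + ∑ i ∈ Finset.range (m + 1), a (m + 2 + i) := by
      have h2 : 2 * (m + 1) + 1 = (m + 2) + (m + 1) := by ring
      rw [h2, Finset.sum_range_add]
    have hrefl : ∑ i ∈ Finset.range (m + 1), a (m + 2 + i)
        = ∑ j ∈ Finset.range (m + 1), (F.q : ℤ) ^ (m + 1 - j) * a j := by
      rw [← Finset.sum_range_reflect (fun i => a (m + 2 + i)) (m + 1)]
      apply Finset.sum_congr rfl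
      intro j hj
      rw [Finset.mem_range] at hj
      have h1 : m + 2 + (m + 1 - 1 - j) = 2 * F.g - j := by omega
      rw [h1, hfe j (by omega), hm]
    rw [hsplit, hrefl, Finset.sum_range_succ a (m + 1)]
    have hL : ∑ i ∈ Finset.range (m + 1), ((F.q : ℤ) ^ (m - i + 1) - 1) * a i
        = (∑ i ∈ Finset.range (m + 1), (F.q : ℤ) ^ (m + 1 - i) * a i)
          - ∑ i ∈ Finset.range (m + 1), a i := by
      rw [← Finset.sum_sub_distrib]
      apply Finset.sum_congr rfl
      intro i hi
      rw [Finset.mem_range] at hi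
      have : m - i + 1 = m + 1 - i := by omega
      rw [this, sub_mul, one_mul]
    rw [hL]
    ring
end

section
/- Let F/F_q be a function field of genus g with L-polynomial L(t) = ∑_{i=0}^{2g} a_i t^i. Then for any k with 1 ≤ k ≤ g, the number of effective divisors of degree g-k is A_{g-k} = (1/(q-1))·[q^{-k+1}·(h - ∑_{i=0}^{g+k-1} a_i) - ∑_{i=0}^{g-k} a_i]. -/
/-- If `L(t) = ∑ aᵢ tⁱ` is the L-polynomial of `F/𝔽_q`, then for `1 ≤ k ≤ g`,
`A_{g-k} = (1/(q-1)) [q^{-k+1} (h - ∑_{i=0}^{g+k-1} aᵢ) - ∑_{i=0}^{g-k} aᵢ]`,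
stated here multiplied through by `(q - 1) q^{k-1}`. -/
theorem stmt14 (F : FnField) (a : ℕ → ℤ) (ha0 : a 0 = 1)
    (hatop : ∀ i, 2 * F.g < i → a i = 0)
    (hfe : ∀ i ≤ F.g, a (2 * F.g - i) = (F.q : ℤ) ^ (F.g - i) * a i)
    (hh : (F.hClass : ℤ) = ∑ i ∈ Finset.range (2 * F.g + 1), a i)
    (hzeta : ∀ m : ℕ, ((F.q : ℤ) - 1) * F.A (m : ℤ) =
      ∑ i ∈ Finset.range (m + 1), ((F.q : ℤ) ^ (m - i + 1) - 1) * a i)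
    (k : ℕ) (hk1 : 1 ≤ k) (hkg : k ≤ F.g) :
    ((F.q : ℤ) - 1) * (F.q : ℤ) ^ (k - 1) * F.A ((F.g : ℤ) - k) =
      ((F.hClass : ℤ) - ∑ i ∈ Finset.range (F.g + k), a i) -
        (F.q : ℤ) ^ (k - 1) * ∑ i ∈ Finset.range (F.g - k + 1), a i := by
  have hm : (F.g : ℤ) - k = ((F.g - k : ℕ) : ℤ) := by omega
  rw [hm]
  have hz := hzeta (F.g - k)
  have step : ((F.q : ℤ) - 1) * (F.q : ℤ) ^ (k - 1) * F.A ((F.g - k : ℕ) : ℤ)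
      = ∑ i ∈ Finset.range (F.g - k + 1),
          ((F.q : ℤ) ^ (F.g - i) - (F.q : ℤ) ^ (k - 1)) * a i := by
    rw [mul_assoc, mul_comm ((F.q : ℤ) ^ (k - 1)), ← mul_assoc, hz, Finset.sum_mul]
    apply Finset.sum_congr rfl
    intro i hi
    simp only [Finset.mem_range] at hi
    have hp : (F.q : ℤ) ^ (F.g - k - i + 1) * (F.q : ℤ) ^ (k - 1) = (F.q : ℤ) ^ (F.g - i) := by
      rw [← pow_add]; congr 1; omega
    linear_combination a i * hp
  have key : ∑ i ∈ Finset.range (F.g - k + 1), (F.q : ℤ) ^ (F.g - i) * a i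
      = (F.hClass : ℤ) - ∑ i ∈ Finset.range (F.g + k), a i := by
    have h1 : ∀ i ∈ Finset.range (F.g - k + 1),
        (F.q : ℤ) ^ (F.g - i) * a i = a (2 * F.g - i) := by
      intro i hi
      simp only [Finset.mem_range] at hi
      rw [hfe i (by omega)]
    rw [Finset.sum_congr rfl h1, hh]
    have h2 : ∑ i ∈ Finset.range (F.g - k + 1), a (2 * F.g - i)
        = ∑ j ∈ Finset.range (F.g - k + 1), a (F.g + k + j) := by
      calc ∑ i ∈ Finset.range (F.g - k + 1), a (2 * F.g - i)
          = ∑ j ∈ Finset.range (F.g - k + 1), a (F.g + k + (F.g - k + 1 - 1 - j)) := by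
            apply Finset.sum_congr rfl
            intro j hj
            simp only [Finset.mem_range] at hj
            congr 1; omega
        _ = ∑ j ∈ Finset.range (F.g - k + 1), a (F.g + k + j) :=
            Finset.sum_range_reflect (fun j => a (F.g + k + j)) (F.g - k + 1)
    have h3 : ∑ j ∈ Finset.range (F.g - k + 1), a (F.g + k + j)
        = ∑ i ∈ Finset.Ico (F.g + k) (2 * F.g + 1), a i := by
      rw [Finset.sum_Ico_eq_sum_range]
      have hn : 2 * F.g + 1 - (F.g + k) = F.g - k + 1 := by omega
      rw [hn]
    rw [h2, h3, Finset.range_eq_Ico,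
      ← Finset.sum_Ico_consecutive a (by omega : 0 ≤ F.g + k) (by omega : F.g + k ≤ 2 * F.g + 1),
      ← Finset.range_eq_Ico]
    ring
  rw [step, ← key, Finset.mul_sum, ← Finset.sum_sub_distrib]
  apply Finset.sum_congr rfl
  intro i _
  ring
end
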